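/- arXiv:0812.5100 — 3 statements merged into one kernel-verified Lean document; each statement's English description precedes it below -/
import Mathlib

section
/- Let m, n be distinct positive integers and b, c ∈ ℂ. If (t^n + b)^{m/n} + c = t^m for all sufficiently large real t (where powers are principal branches), then b = 0 and c = 0. -/
open Complex Polynomial

/-- Key counting lemma: if `(z^m - c)^n = (z^n + b)^m` for all `z` and `b ≠ 0`, then `n ≤ m`. -/
lemma key_count (m n : ℕ) (hm : 1 ≤ m) (hn : 1 ≤ n) (b c : ℂ)
    (H : ∀ z : ℂ, (z ^ m - c) ^ n = (z ^ n + b) ^ m) (hb : b ≠ 0) : n ≤ m := by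
  classical
  have hζ := Complex.isPrimitiveRoot_exp n (by omega)
  have hcard : Multiset.card (nthRoots n (-b)) = n := by
    rw [hζ.card_nthRoots, if_pos (IsAlgClosed.exists_pow_nat_eq (-b) (by omega))]
  have hnodup : (nthRoots n (-b)).Nodup := hζ.nthRoots_nodup (neg_ne_zero.2 hb)
  -- each n-th root of -b is an m-th root of c
  have hsub : (nthRoots n (-b)).toFinset ⊆ (nthRoots m c).toFinset := by
    intro z hz
    rw [Multiset.mem_toFinset, mem_nthRoots (by omega)] at hz
    rw [Multiset.mem_toFinset, mem_nthRoots (by omega)]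
    have := H z
    rw [hz, neg_add_cancel, zero_pow (by omega), pow_eq_zero_iff (by omega), sub_eq_zero] at this
    exact this
  calc n = (nthRoots n (-b)).toFinset.card := by
        rw [Multiset.toFinset_card_of_nodup hnodup, hcard]
    _ ≤ (nthRoots m c).toFinset.card := Finset.card_le_card hsub
    _ ≤ Multiset.card (nthRoots m c) := Multiset.toFinset_card_le _
    _ ≤ m := card_nthRoots m c

/-- If `m ≠ n` are positive integers, `b, c ∈ ℂ`, and
`(t^n + b)^{m/n} + c = t^m` for all sufficiently large real `t` (principal branch powers),
then `b = 0` and `c = 0`. -/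
theorem stmt5 (m n : ℕ) (hm : 1 ≤ m) (hn : 1 ≤ n) (hmn : m ≠ n) (b c : ℂ)
    (h : ∃ R : ℝ, ∀ t : ℝ, R ≤ t →
      ((t : ℂ) ^ n + b) ^ ((m : ℂ) / (n : ℂ)) + c = (t : ℂ) ^ m) :
    b = 0 ∧ c = 0 := by
  classical
  obtain ⟨R, hR⟩ := h
  have hn0 : (n : ℂ) ≠ 0 := Nat.cast_ne_zero.2 (by omega)
  -- polynomial identity for all z
  have H : ∀ z : ℂ, (z ^ m - c) ^ n = (z ^ n + b) ^ m := by
    have hroots : ∀ t : ℝ, R ≤ t →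
        (((t : ℂ)) ^ m - c) ^ n = ((t : ℂ) ^ n + b) ^ m := by
      intro t ht
      have h1 : ((t : ℂ) ^ n + b) ^ ((m : ℂ) / (n : ℂ)) = (t : ℂ) ^ m - c := by
        linear_combination hR t ht
      calc ((t : ℂ) ^ m - c) ^ n = (((t : ℂ) ^ n + b) ^ ((m : ℂ) / (n : ℂ))) ^ n := by
            rw [h1]
        _ = ((t : ℂ) ^ n + b) ^ (((m : ℂ) / (n : ℂ)) * n) := (cpow_mul_nat _ _ _).symm
        _ = ((t : ℂ) ^ n + b) ^ ((m : ℂ)) := by rw [div_mul_cancel₀ _ hn0]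
        _ = ((t : ℂ) ^ n + b) ^ m := cpow_natCast _ _
    set p : ℂ[X] := (X ^ m - C c) ^ n - (X ^ n + C b) ^ m with hp
    have hp0 : p = 0 := by
      apply eq_zero_of_infinite_isRoot
      apply Set.Infinite.mono (s := (fun t : ℝ => (t : ℂ)) '' Set.Ici R)
      · rintro z ⟨t, ht, rfl⟩
        simp only [Set.mem_setOf_eq, IsRoot, hp]
        simp only [eval_sub, eval_pow, eval_add, eval_X, eval_C]
        rw [hroots t ht]
        ring
      · exact (Set.Ici_infinite R).image fun a _ b _ hab => Complex.ofReal_inj.1 hab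
    intro z
    have := congrArg (eval z) hp0
    simp only [hp, eval_sub, eval_pow, eval_add, eval_X, eval_C, eval_zero] at this
    exact sub_eq_zero.1 this
  -- now the algebra
  by_cases hb : b = 0
  · refine ⟨hb, ?_⟩
    by_contra hc
    -- c ≠ 0: pick z with z^m = c, z ≠ 0, then z^n = -b = 0 so z = 0, contradiction
    obtain ⟨z, hz⟩ := IsAlgClosed.exists_pow_nat_eq c (n := m) (by omega)
    have hz0 : z ≠ 0 := fun h0 => hc (by rw [← hz, h0, zero_pow (by omega)])
    have := H z
    rw [hz, sub_self, zero_pow (by omega), hb, add_zero] at this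
    exact hz0 (pow_eq_zero_iff (by omega : n ≠ 0) |>.1
      (pow_eq_zero_iff (by omega : m ≠ 0) |>.1 this.symm))
  · exfalso
    -- b ≠ 0 ⇒ c ≠ 0
    obtain ⟨z, hz⟩ := IsAlgClosed.exists_pow_nat_eq (-b) (n := n) (by omega)
    have hz0 : z ≠ 0 := fun h0 => hb (by have := hz; rw [h0, zero_pow (by omega)] at this; simpa using this.symm)
    have hzc : z ^ m = c := by
      have := H z
      rw [hz, neg_add_cancel, zero_pow (by omega), pow_eq_zero_iff (by omega), sub_eq_zero] at this
      exact this
    have hc : c ≠ 0 := fun h0 => hz0 (pow_eq_zero_iff (n := m) (by omega) |>.1 (by rw [hzc, h0]))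
    have h1 : n ≤ m := key_count m n hm hn b c H hb
    have h2 : m ≤ n := key_count n m hn hm (-c) (-b)
      (fun z => by linear_combination -(H z)) (neg_ne_zero.2 hc)
    omega
end

section
/- Let m ≠ n be positive integers, a, b ∈ ℂ, and T > 0. If the composition of the first return maps P_m(a)(r) = r(1 - m a T r^m)^{-1/m} and P_n(b)(r) = r(1 - n b T r^n)^{-1/n} equals the identity series r (as formal power series), then a = 0 and b = 0. -/
open Finset

/-- Composition `f ∘ g` of formal power series (valid when `g` has zero constant term). -/
noncomputable def psComp (f g : PowerSeries ℂ) : PowerSeries ℂ :=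
  PowerSeries.mk fun d =>
    ∑ n ∈ Finset.range (d + 1), PowerSeries.coeff n f * PowerSeries.coeff d (g ^ n)

/-- The first return map `P_n(a)(r) = r (1 - n a T r^n)^{-1/n}` as a formal power series,
via the generalized binomial expansion. -/
noncomputable def returnMap (n : ℕ) (T : ℝ) (a : ℂ) : PowerSeries ℂ :=
  PowerSeries.mk fun m =>
    if 1 ≤ m ∧ n ∣ (m - 1) then
      ((∏ i ∈ Finset.range ((m - 1) / n), ((n : ℂ) * i + 1)) / (((m - 1) / n).factorial : ℂ))
        * ((a * T) ^ ((m - 1) / n))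
    else 0

/-! Each return map is a perturbation of the identity:
`P_n(a)(r) = r + a T r^(n+1) + O(r^(n+2))`. If two series agree with `r` up to degree `k ≥ 1`,
the degree `k + 1` coefficient of their composition is the sum of theirs. With `k = min m n` and
`m ≠ n`, exactly one of `a T`, `b T` appears there, so the map of lower order is the identity;
the composition identity then forces the other map to be the identity as well. -/

open PowerSeries

theorem coeff_pow_self_of_constantCoeff_eq_zero {R : Type*} [CommSemiring R] {g : R⟦X⟧}
    (hg : constantCoeff g = 0) (k : ℕ) : coeff k (g ^ k) = coeff 1 g ^ k := by
  obtain ⟨h, rfl⟩ := X_dvd_iff.mpr hg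
  have hX := coeff_X_pow_mul (h ^ k) k 0
  have hX1 := coeff_X_pow_mul h 1 0
  rw [zero_add] at hX hX1
  rw [mul_pow, hX, ← pow_one X, hX1, coeff_zero_eq_constantCoeff, map_pow]

theorem coeff_psComp (f g : PowerSeries ℂ) (d : ℕ) :
    coeff d (psComp f g) = ∑ j ∈ range (d + 1), coeff j f * coeff d (g ^ j) :=
  coeff_mk _ _

theorem psComp_X_right (f : PowerSeries ℂ) : psComp f X = f := by
  ext d
  rw [coeff_psComp, sum_eq_single_of_mem d (self_mem_range_succ d)]
  · simp
  · intro j _ hj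
    rw [coeff_X_pow, if_neg (Ne.symm hj), mul_zero]

theorem psComp_X_left {g : PowerSeries ℂ} (hg : constantCoeff g = 0) : psComp X g = g := by
  ext d
  rw [coeff_psComp]
  rcases d with _ | d
  · simp [hg]
  · rw [sum_eq_single_of_mem 1 (by simp)]
    · simp
    · intro j _ hj
      rw [coeff_X, if_neg hj, zero_mul]

/-- Only the terms `j = 1` and `j = k + 1` of the composition sum survive in degree `k + 1`. -/
theorem coeff_succ_psComp {k : ℕ} (hk : 1 ≤ k) {f g : PowerSeries ℂ}
    (hf : ∀ j ≤ k, coeff j f = coeff j X) (hg : ∀ j ≤ k, coeff j g = coeff j X) :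
    coeff (k + 1) (psComp f g) = coeff (k + 1) f + coeff (k + 1) g := by
  have hg0 : constantCoeff g = 0 := by
    simpa using hg 0 (Nat.zero_le k)
  rw [coeff_psComp, sum_range_succ, coeff_pow_self_of_constantCoeff_eq_zero hg0,
    hg 1 hk, coeff_X, if_pos rfl, one_pow, mul_one, add_comm,
    sum_eq_single_of_mem 1 (by simp; omega)]
  · rw [hf 1 hk]
    simp
  · intro j hj hj1
    rw [hf j (by simpa [Nat.lt_succ_iff] using hj), coeff_X, if_neg hj1, zero_mul]

section returnMap

variable {m n : ℕ} {T : ℝ} {a b : ℂ}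

theorem coeff_returnMap_of_le {j : ℕ} (hj : j ≤ n) :
    coeff j (returnMap n T a) = coeff j X := by
  rcases j with _ | _ | j
  · simp [returnMap]
  · simp [returnMap]
  · have : ¬ n ∣ j + 1 := Nat.not_dvd_of_pos_of_lt (by omega) (by omega)
    simp [returnMap, this, coeff_X]

theorem coeff_succ_returnMap (hn : 1 ≤ n) : coeff (n + 1) (returnMap n T a) = a * T := by
  simp [returnMap, Nat.div_self hn]

theorem returnMap_zero : returnMap n T 0 = X := by
  ext d
  simp only [returnMap, coeff_mk, coeff_X]
  split_ifs with hd hd1 hd1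
  · subst hd1; simp
  · obtain ⟨hd, c, hc⟩ := hd
    have hc0 : c ≠ 0 := by rintro rfl; omega
    have : (d - 1) / n = c := by
      rcases Nat.eq_zero_or_pos n with rfl | hn
      · omega
      · rw [hc, Nat.mul_div_cancel_left c hn]
    simp [this, hc0]
  · exact absurd ⟨by omega, by simp [hd1]⟩ hd
  · rfl

theorem returnMap_eq_X_iff (hn : 1 ≤ n) (hT : (T : ℂ) ≠ 0) :
    returnMap n T a = X ↔ a = 0 := by
  refine ⟨fun h => ?_, fun ha => ha ▸ returnMap_zero⟩
  have key := congrArg (coeff (n + 1)) h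
  rw [coeff_succ_returnMap hn, coeff_X, if_neg (by omega)] at key
  simpa [hT] using key

theorem constantCoeff_returnMap : constantCoeff (returnMap n T a) = 0 := by
  simpa using coeff_returnMap_of_le (T := T) (a := a) (Nat.zero_le n)

theorem coeff_succ_psComp_returnMap_of_lt (hm : 1 ≤ m) (hmn : m < n) :
    coeff (m + 1) (psComp (returnMap m T a) (returnMap n T b)) = a * T := by
  rw [coeff_succ_psComp hm (fun j => coeff_returnMap_of_le)
      (fun j hj => coeff_returnMap_of_le (hj.trans hmn.le)),
    coeff_succ_returnMap hm, coeff_returnMap_of_le hmn, coeff_X, if_neg (by omega),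
    add_zero]

theorem coeff_succ_psComp_returnMap_of_gt (hn : 1 ≤ n) (hnm : n < m) :
    coeff (n + 1) (psComp (returnMap m T a) (returnMap n T b)) = b * T := by
  rw [coeff_succ_psComp hn (fun j hj => coeff_returnMap_of_le (hj.trans hnm.le))
      (fun j => coeff_returnMap_of_le),
    coeff_succ_returnMap hn, coeff_returnMap_of_le hnm, coeff_X, if_neg (by omega),
    zero_add]

end returnMap

/-- If `m ≠ n` are positive integers and the composition of the first return maps
`P_m(a)` and `P_n(b)` equals the identity series `r`, then `a = 0` and `b = 0`. -/
theorem stmt7 (m n : ℕ) (hm : 1 ≤ m) (hn : 1 ≤ n) (hmn : m ≠ n) (a b : ℂ) (T : ℝ)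
    (hT : 0 < T)
    (h : psComp (returnMap m T a) (returnMap n T b) = PowerSeries.X) :
    a = 0 ∧ b = 0 := by
  have hT' : (T : ℂ) ≠ 0 := Complex.ofReal_ne_zero.mpr hT.ne'
  rcases hmn.lt_or_gt with hlt | hlt
  · have ha : a = 0 := by
      have key := congrArg (coeff (m + 1)) h
      rw [coeff_succ_psComp_returnMap_of_lt hm hlt, coeff_X, if_neg (by omega)] at key
      simpa [hT'] using key
    subst ha
    rw [returnMap_zero, psComp_X_left constantCoeff_returnMap] at h
    exact ⟨rfl, (returnMap_eq_X_iff hn hT').mp h⟩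
  · have hb : b = 0 := by
      have key := congrArg (coeff (n + 1)) h
      rw [coeff_succ_psComp_returnMap_of_gt hn hlt, coeff_X, if_neg (by omega)] at key
      simpa [hT'] using key
    subst hb
    rw [returnMap_zero, psComp_X_right] at h
    exact ⟨(returnMap_eq_X_iff hm hT').mp h, rfl⟩
end

section
/- In the group G of elements 1 + I (noncommutative formal power series with constant term 1) under multiplication, the elements g_n := exp(a_n X_n t^n) for distinct indices n and nonzero a_n ∈ ℂ satisfy: a finite product g_{k_1}^{ε_1} ··· g_{k_l}^{ε_l} with k_i ≠ k_{i+1} for all i and all exponents corresponding to nonzero coefficients is never equal to 1. Equivalently, the subgroups {exp(a X_n t^n) : a ∈ ℂ} ≅ (ℂ,+) for distinct n generate their free product inside G. -/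
open Finset PowerSeries

/-- The element `exp(a X_n t^n) = Σ_j (a^j/j!) X_n^j t^{nj}` of the algebra
`ℂ⟨X_1,X_2,…⟩[[t]]`, modelled as a formal power series in the central variable `t` with
coefficients in the free algebra `FreeAlgebra ℂ ℕ` on the variables `X_n`. -/
noncomputable def expGen (n : ℕ) (a : ℂ) : PowerSeries (FreeAlgebra ℂ ℕ) :=
  PowerSeries.mk fun m =>
    if n ∣ m then (a ^ (m / n) / ((m / n).factorial : ℂ)) • (FreeAlgebra.ι ℂ n) ^ (m / n)
    else 0

/-!
Represent `ℂ⟨X⟩` by `(l+1) × (l+1)` matrices, sending `X_n` to the matrix `M_n` with a `1` at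
`(r, r+1)` for every position `r` with `k_r = n`. Since consecutive `k_r` differ, `M_n² = 0`, so
`exp(a X_n t^n)` becomes the polynomial `1 + a M_n t^n` and we may put `t = 1`: the alternating
product would give `∏ (1 + a_i M_{k_i}) = 1`. But each factor raises the row index by at most
one, so the `(0, l)` entry of the product comes from the single staircase path and equals
`∏ a_i ≠ 0`, while that entry of `1` is `0`.
-/

section SquareZero

variable {A : Type*} [Ring A] [Algebra ℂ A]

theorem map_expGen_of_sq_eq_zero (f : FreeAlgebra ℂ ℕ →ₐ[ℂ] A) {n : ℕ} (hn : 0 < n)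
    (a : ℂ) (hsq : f (FreeAlgebra.ι ℂ n) ^ 2 = 0) :
    PowerSeries.map (f : FreeAlgebra ℂ ℕ →+* A) (expGen n a) =
      ((1 + Polynomial.monomial n (a • f (FreeAlgebra.ι ℂ n)) : Polynomial A) :
        PowerSeries A) := by
  ext m
  rw [coeff_map, Polynomial.coeff_coe, expGen, coeff_mk, Polynomial.coeff_add,
    Polynomial.coeff_one, Polynomial.coeff_monomial]
  by_cases hdvd : n ∣ m
  · obtain ⟨j, rfl⟩ := hdvd
    rw [if_pos (dvd_mul_right n j), Nat.mul_div_cancel_left j hn]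
    match j with
    | 0 => simp [hn.ne']
    | 1 => simp [hn.ne']
    | j + 2 =>
      have hx : f (FreeAlgebra.ι ℂ n) ^ (j + 2) = 0 := pow_eq_zero_of_le (by omega) hsq
      simp [hx, hn.ne']
  · have hm : m ≠ 0 := by rintro rfl; exact hdvd (dvd_zero n)
    have hmn : n ≠ m := by rintro rfl; exact hdvd dvd_rfl
    simp [hdvd, hm, hmn]

theorem list_prod_one_add_smul_eq_one_of_prod_expGen_eq_one (f : FreeAlgebra ℂ ℕ →ₐ[ℂ] A)
    (L : List (ℕ × ℂ))
    (hL : ∀ q ∈ L, 0 < q.1 ∧ f (FreeAlgebra.ι ℂ q.1) ^ 2 = 0)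
    (h : (L.map fun q => expGen q.1 q.2).prod = 1) :
    (L.map fun q => 1 + q.2 • f (FreeAlgebra.ι ℂ q.1)).prod = 1 := by
  set P : Polynomial A := (L.map fun q =>
    1 + Polynomial.monomial q.1 (q.2 • f (FreeAlgebra.ι ℂ q.1))).prod
  -- every factor maps to a polynomial, so the product can be evaluated at `t = 1`
  have hP : (P : PowerSeries A) = 1 := by
    rw [← Polynomial.coeToPowerSeries.ringHom_apply, map_list_prod, List.map_map,
      ← map_one (PowerSeries.map (f : FreeAlgebra ℂ ℕ →+* A)), ← h, map_list_prod,
      List.map_map]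
    refine congrArg List.prod (List.map_congr_left fun q hq => ?_)
    exact (map_expGen_of_sq_eq_zero f (hL q hq).1 q.2 (hL q hq).2).symm
  have hP1 : P = 1 := Polynomial.coe_injective A (by rw [hP, Polynomial.coe_one])
  have := congrArg (Polynomial.eval₂RingHom' (RingHom.id A) 1 fun _ => Commute.one_right _) hP1
  simpa [P, map_list_prod, List.map_map, Function.comp_def, Polynomial.eval₂_monomial]
    using this

end SquareZero

namespace Matrix

variable {R : Type*} [Semiring R] {N : ℕ}

def UpperBandwidthLE (m : ℕ) (B : Matrix (Fin N) (Fin N) R) : Prop :=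
  ∀ r c, B r c ≠ 0 → (c : ℕ) ≤ r + m

theorem upperBandwidthLE_one : UpperBandwidthLE 0 (1 : Matrix (Fin N) (Fin N) R) := by
  intro r c h
  by_contra hc
  exact h (one_apply_ne (by rintro rfl; omega))

theorem UpperBandwidthLE.mul {m m' : ℕ} {B Q : Matrix (Fin N) (Fin N) R}
    (hB : UpperBandwidthLE m B) (hQ : UpperBandwidthLE m' Q) :
    UpperBandwidthLE (m + m') (B * Q) := by
  intro r c h
  rw [mul_apply] at h
  obtain ⟨x, -, hx⟩ := Finset.exists_ne_zero_of_sum_ne_zero h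
  have := hB r x (left_ne_zero_of_mul hx)
  have := hQ x c (right_ne_zero_of_mul hx)
  omega

theorem upperBandwidthLE_list_prod (Bs : List (Matrix (Fin N) (Fin N) R))
    (hBs : ∀ B ∈ Bs, UpperBandwidthLE 1 B) : UpperBandwidthLE Bs.length Bs.prod := by
  induction Bs with
  | nil => exact upperBandwidthLE_one
  | cons B Bs ih =>
    rw [List.prod_cons, List.length_cons, add_comm]
    exact (hBs B List.mem_cons_self).mul (ih fun B' hB' => hBs B' (List.mem_cons_of_mem _ hB'))

theorem UpperBandwidthLE.mul_apply_of_eq_add {m : ℕ} {B Q : Matrix (Fin N) (Fin N) R}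
    (hB : UpperBandwidthLE 1 B) (hQ : UpperBandwidthLE m Q) {r r' c : Fin N}
    (hr' : (r' : ℕ) = r + 1) (hc : (c : ℕ) = r + 1 + m) : (B * Q) r c = B r r' * Q r' c := by
  refine Finset.sum_eq_single_of_mem r' (Finset.mem_univ _) fun x _ hx => ?_
  by_contra h
  have := hB r x (left_ne_zero_of_mul h)
  have := hQ x c (right_ne_zero_of_mul h)
  exact hx (Fin.ext (by omega))

end Matrix

section LetterMatrix

open Matrix

def letterMatrix (R : Type*) [Semiring R] (N : ℕ) (w : List ℕ) (n : ℕ) :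
    Matrix (Fin N) (Fin N) R :=
  Matrix.of fun r c => if (c : ℕ) = r + 1 ∧ w[(r : ℕ)]? = some n then 1 else 0

variable {R : Type*} [Semiring R] {N : ℕ}

theorem letterMatrix_sq_eq_zero {w : List ℕ} (hw : w.IsChain (· ≠ ·)) (n : ℕ) :
    letterMatrix R N w n ^ 2 = 0 := by
  ext r c
  rw [sq, mul_apply, Matrix.zero_apply]
  refine Finset.sum_eq_zero fun x _ => ?_
  simp only [letterMatrix, of_apply, mul_ite, mul_one, mul_zero]
  split_ifs with hx hr <;> try rfl
  obtain ⟨-, hxn⟩ := hx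
  obtain ⟨hxr, hrn⟩ := hr
  rw [hxr] at hxn
  obtain ⟨hlt, rfl⟩ := List.getElem?_eq_some_iff.mp hxn
  obtain ⟨_, hsucc⟩ := List.getElem?_eq_some_iff.mp hrn
  exact (hw.getElem r hlt hsucc).elim

theorem upperBandwidthLE_one_add_smul_letterMatrix (w : List ℕ) (n : ℕ) (a : R) :
    UpperBandwidthLE 1 (1 + a • letterMatrix R N w n) := by
  intro r c h
  by_contra hc
  have hrc : r ≠ c := by rintro rfl; omega
  exact h (by simp [letterMatrix, one_apply_ne hrc, show (c : ℕ) ≠ r + 1 by omega])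

theorem list_prod_apply_letterMatrix {w : List ℕ} (L : List (ℕ × R)) {p : ℕ}
    (hw : w.drop p = L.map Prod.fst) {r c : Fin N} (hr : (r : ℕ) = p)
    (hc : (c : ℕ) = p + L.length) :
    (L.map fun q => 1 + q.2 • letterMatrix R N w q.1).prod r c = (L.map Prod.snd).prod := by
  induction L generalizing p r with
  | nil =>
    rw [List.length_nil, add_zero, ← hr] at hc
    simp [Fin.ext hc]
  | cons q L ih =>
    rw [List.length_cons] at hc
    have hN : p + 1 < N := by omega
    have hp : w[p]? = some q.1 := by
      rw [← Nat.add_zero p, ← List.getElem?_drop, hw]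
      rfl
    have hw' : w.drop (p + 1) = L.map Prod.fst := by
      rw [← List.drop_drop, hw]
      rfl
    have hstep : (1 + q.2 • letterMatrix R N w q.1) r ⟨p + 1, hN⟩ = q.2 := by
      have hne : r ≠ ⟨p + 1, hN⟩ := by simp [Fin.ext_iff, hr]
      simp [letterMatrix, one_apply_ne hne, hr, hp]
    have hQ := upperBandwidthLE_list_prod (L.map fun q => 1 + q.2 • letterMatrix R N w q.1)
      fun B hB => by
        obtain ⟨q', -, rfl⟩ := List.mem_map.mp hB
        exact upperBandwidthLE_one_add_smul_letterMatrix w q'.1 q'.2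
    rw [List.map_cons, List.prod_cons,
      (upperBandwidthLE_one_add_smul_letterMatrix w q.1 q.2).mul_apply_of_eq_add hQ
        (r' := ⟨p + 1, hN⟩) (by simp [hr]) (by simp [hr, hc]; omega),
      hstep, ih hw' rfl (by omega), List.map_cons, List.prod_cons]

end LetterMatrix

/-- In the group of noncommutative formal power series with constant term `1`, an
alternating product `g_{k_1} ⋯ g_{k_l}` of the elements `g_k = exp(a_k X_k t^k)` with
nonzero coefficients `a_i` and `k_i ≠ k_{i+1}` is never `1`; equivalently, the subgroups
`{exp(a X_n t^n) : a ∈ ℂ} ≅ (ℂ,+)` for distinct `n` generate their free product. -/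
theorem stmt13 (l : ℕ) (hl : 1 ≤ l) (k : Fin l → ℕ) (hk : ∀ i, 1 ≤ k i)
    (a : Fin l → ℂ) (ha : ∀ i, a i ≠ 0)
    (halt : ∀ i : Fin l, ∀ h : (i : ℕ) + 1 < l, k i ≠ k ⟨(i : ℕ) + 1, h⟩) :
    (List.ofFn fun i : Fin l => expGen (k i) (a i)).prod ≠ 1 := by
  intro h
  set L := List.ofFn fun i => (k i, a i)
  set M := letterMatrix ℂ (l + 1) (L.map Prod.fst)
  have hchain : (L.map Prod.fst).IsChain (· ≠ ·) := by
    simpa [L, List.map_ofFn, Function.comp_def] using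
      List.isChain_ofFn.2 fun i hi => halt ⟨i, by omega⟩ hi
  have hprod : (L.map fun q => 1 + q.2 • M q.1).prod = 1 := by
    simpa using list_prod_one_add_smul_eq_one_of_prod_expGen_eq_one (FreeAlgebra.lift ℂ M) L
      (fun q hq => ⟨by obtain ⟨i, rfl⟩ := List.mem_ofFn.mp hq; exact hk i,
        by rw [FreeAlgebra.lift_ι_apply]; exact letterMatrix_sq_eq_zero hchain q.1⟩)
      (by simpa [L, List.map_ofFn, Function.comp_def] using h)
  have hcorner := congrFun (congrFun hprod 0) (Fin.last l)
  rw [list_prod_apply_letterMatrix L rfl rfl (by simp [L]),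
    Matrix.one_apply_ne (by simp [Fin.ext_iff]; omega)] at hcorner
  simp only [L, List.map_ofFn, Function.comp_def, List.prod_ofFn] at hcorner
  exact Finset.prod_ne_zero_iff.mpr (fun i _ => ha i) hcorner
end
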